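/- Let τ ∈ iℝ_{>0}, so 0 < q = exp(2πiτ) < 1, and let λ ∈ ℝ. Define the operators (X⁺_λ f)(z) = q^{z}·( q^{−1/2−iλ}f(z−1) − q^{1/2+iλ}f(z+1) )/(q^{−1}−q), (X⁻_λ f)(z) = q^{−z}·( q^{−1/2−iλ}f(z+1) − q^{1/2+iλ}f(z−1) )/(q^{−1}−q), and the pairing ⟨f,g⟩ = ∫_0^1 f(y/τ)·conj(g(y/τ)) dy. Suppose f, g : ℂ → ℂ are τ^{-1}-periodic and analytic on the strip {z ∈ ℂ : |Re(z)| ≤ 1}. Then ⟨X⁺_λ f, g⟩ = −⟨f, X⁻_λ g⟩, ⟨X⁻_λ f, g⟩ = −⟨f, X⁺_λ g⟩, and ⟨f(·+1), g⟩ = ⟨f, g(·+1)⟩ as well as ⟨f(·−1), g⟩ = ⟨f, g(·−1)⟩. -/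

import Mathlib

/-!
On the imaginary axis `conj (g z) = g* z`, where `g* z = conj (g (-conj z))` is the
reflection of `g` in that axis; `g*` is holomorphic wherever `g` is, so every pairing becomes
`∫₀¹ H (y τ⁻¹) dy` for a holomorphic `τ⁻¹`-periodic `H`. Because `τ⁻¹` is purely imaginary,
Cauchy's theorem on the rectangle with vertices `0`, `c`, `c + τ⁻¹`, `τ⁻¹` (whose horizontal
sides cancel by periodicity) shows that this integral does not change when `H` is translated
by a real `c`. This moves a shift by `±1` from one argument of the pairing to the other. For
the generators, `(X⁻_λ g)* = X⁺_{-λ} g*` and `q^(z + τ⁻¹) = q^z`, and after the translations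
the two sides agree because `q^{-1/2-iλ} q = q^{1/2-iλ}` and `q^{1/2+iλ} q⁻¹ = q^{-1/2+iλ}`.
-/

noncomputable section

open Complex MeasureTheory

/-- `q^u = exp(2πiτu)`. -/
def qpow (τ u : ℂ) : ℂ := Complex.exp (2 * (Real.pi : ℂ) * Complex.I * τ * u)

/-- The principal series action of the generator `X⁺`:
`(X⁺_λ f)(z) = q^z·(q^{−1/2−iλ}f(z−1) − q^{1/2+iλ}f(z+1))/(q^{−1}−q)`. -/
def Xplus (τ lam : ℂ) (f : ℂ → ℂ) (z : ℂ) : ℂ :=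
  qpow τ z * (qpow τ (-(1 / 2) - Complex.I * lam) * f (z - 1) -
      qpow τ (1 / 2 + Complex.I * lam) * f (z + 1)) / (qpow τ (-1) - qpow τ 1)

/-- The principal series action of the generator `X⁻`:
`(X⁻_λ f)(z) = q^{−z}·(q^{−1/2−iλ}f(z+1) − q^{1/2+iλ}f(z−1))/(q^{−1}−q)`. -/
def Xminus (τ lam : ℂ) (f : ℂ → ℂ) (z : ℂ) : ℂ :=
  qpow τ (-z) * (qpow τ (-(1 / 2) - Complex.I * lam) * f (z + 1) -
      qpow τ (1 / 2 + Complex.I * lam) * f (z - 1)) / (qpow τ (-1) - qpow τ 1)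

/-- The pairing `⟨f,g⟩ = ∫_0^1 f(y/τ)·conj(g(y/τ)) dy`. -/
def pairSU (τ : ℂ) (f g : ℂ → ℂ) : ℂ :=
  ∫ y in (0 : ℝ)..1, f ((y : ℂ) / τ) * (starRingEnd ℂ) (g ((y : ℂ) / τ))

open Function Set
open scoped Interval ComplexConjugate

theorem conj_eq_neg_of_re_eq_zero {z : ℂ} (hz : z.re = 0) : conj z = -z := by
  apply Complex.ext <;> simp [hz]

theorem re_inv_eq_zero {z : ℂ} (hz : z.re = 0) : z⁻¹.re = 0 := by
  simp [inv_re, hz]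

theorem integral_vertical_eq_of_periodic {H : ℂ → ℂ} {s a b : ℝ} (hper : Periodic H (s * I))
    (hH : ∀ z : ℂ, z.re ∈ [[a, b]] → DifferentiableAt ℂ H z) :
    ∫ y in (0 : ℝ)..s, H (a + y * I) = ∫ y in (0 : ℝ)..s, H (b + y * I) := by
  have hrect := integral_boundary_rect_eq_zero_of_differentiableOn H a (b + s * I)
    fun z hz => (hH z (by simpa using hz.1)).differentiableWithinAt
  have horizontal : ∫ x : ℝ in a..b, H (x + s * I) = ∫ x : ℝ in a..b, H (x + 0 * I) := by
    simp only [hper _, zero_mul, add_zero]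
  simp only [ofReal_re, ofReal_im, add_re, add_im, mul_re, mul_im, I_re, I_im, mul_zero,
    mul_one, zero_add, add_zero, horizontal, sub_self, ofReal_zero, ← smul_sub,
    smul_eq_zero, I_ne_zero, false_or, sub_eq_zero] at hrect
  exact hrect.symm

def periodIntegral (ω : ℂ) (H : ℂ → ℂ) : ℂ := ∫ y in (0 : ℝ)..1, H (y * ω)

section periodIntegral

variable {ω : ℂ}

theorem smul_periodIntegral_of_re_eq_zero (hω : ω.re = 0) (H : ℂ → ℂ) :
    ω.im • periodIntegral ω H = ∫ y in (0 : ℝ)..ω.im, H (y * I) := by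
  have hω' : (ω.im : ℂ) * I = ω := by simpa [hω] using re_add_im ω
  rw [periodIntegral, ← hω']
  simpa [mul_assoc] using
    intervalIntegral.smul_integral_comp_mul_right (fun y : ℝ => H (y * I)) ω.im (a := 0) (b := 1)

theorem periodIntegral_comp_add_ofReal (hω : ω.re = 0) (hω₀ : ω ≠ 0) {H : ℂ → ℂ}
    (hper : Periodic H ω) {c : ℝ}
    (hH : ∀ z : ℂ, z.re ∈ [[0, c]] → DifferentiableAt ℂ H z) :
    periodIntegral ω (fun z => H (z + c)) = periodIntegral ω H := by
  have hω' : (ω.im : ℂ) * I = ω := by simpa [hω] using re_add_im ω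
  refine smul_right_injective ℂ (fun h => hω₀ (Complex.ext hω h)) ?_
  have hvert := integral_vertical_eq_of_periodic (hω' ▸ hper) hH
  simp only [ofReal_zero, zero_add] at hvert
  simp only [smul_periodIntegral_of_re_eq_zero hω, hvert, add_comm]

theorem periodIntegral_comp_add_mul (hω : ω.re = 0) (hω₀ : ω ≠ 0) {F G : ℂ → ℂ}
    (hF : Periodic F ω) (hG : Periodic G ω) {c : ℝ}
    (hFd : ∀ z : ℂ, z.re ∈ [[0, c]] → DifferentiableAt ℂ F z)
    (hGd : ∀ z : ℂ, z.re ∈ [[-c, 0]] → DifferentiableAt ℂ G z) :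
    periodIntegral ω (fun z => F (z + c) * G z) =
      periodIntegral ω (fun z => F z * G (z - c)) := by
  have hGd' : ∀ z : ℂ, z.re ∈ [[0, c]] → DifferentiableAt ℂ (fun z => G (z - c)) z := by
    intro z hz
    have hz' : z.re - c ∈ [[-c, 0]] := by
      rw [← mem_preimage (f := fun x => x - c), preimage_sub_const_uIcc]
      simpa using hz
    exact (hGd (z - c) (by simpa using hz')).comp z (differentiableAt_id.sub_const _)
  simpa only [add_sub_cancel_right] using periodIntegral_comp_add_ofReal
    (H := fun z => F z * G (z - c)) hω hω₀ (hF.mul (hG.sub_const _)) fun z hz =>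
      (hFd z hz).mul (hGd' z hz)

theorem periodIntegral_const_mul (a : ℂ) (H : ℂ → ℂ) :
    periodIntegral ω (fun z => a * H z) = a * periodIntegral ω H :=
  intervalIntegral.integral_const_mul a _

theorem periodIntegral_const_mul_sub (hω : ω.re = 0) (a b : ℂ) {H₁ H₂ : ℂ → ℂ}
    (hH₁ : ∀ z : ℂ, z.re = 0 → ContinuousAt H₁ z)
    (hH₂ : ∀ z : ℂ, z.re = 0 → ContinuousAt H₂ z) :
    periodIntegral ω (fun z => a * H₁ z - b * H₂ z) =
      a * periodIntegral ω H₁ - b * periodIntegral ω H₂ := by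
  have hint : ∀ H : ℂ → ℂ, (∀ z : ℂ, z.re = 0 → ContinuousAt H z) →
      IntervalIntegrable (fun y : ℝ => H (y * ω)) volume 0 1 := fun H hH =>
    (continuous_iff_continuousAt.2 fun y =>
      (hH _ (by simp [hω])).comp (by fun_prop)).intervalIntegrable 0 1
  rw [← periodIntegral_const_mul, ← periodIntegral_const_mul]
  exact intervalIntegral.integral_sub ((hint H₁ hH₁).const_mul a)
    ((hint H₂ hH₂).const_mul b)

end periodIntegral

def conjReflect (g : ℂ → ℂ) (z : ℂ) : ℂ := conj (g (-conj z))

section conjReflect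

variable {g : ℂ → ℂ}

theorem conjReflect_apply_of_re_eq_zero {z : ℂ} (hz : z.re = 0) :
    conjReflect g z = conj (g z) := by
  rw [conjReflect, conj_eq_neg_of_re_eq_zero hz, neg_neg]

theorem conjReflect_comp_add (c : ℂ) :
    conjReflect (fun z => g (z + c)) = fun z => conjReflect g (z - conj c) := by
  funext z
  simp only [conjReflect, map_sub, conj_conj, neg_sub, neg_add_eq_sub]

theorem Function.Periodic.conjReflect {ω : ℂ} (hg : Periodic g ω) (hω : ω.re = 0) :
    Periodic (conjReflect g) ω := by
  intro z
  simp only [_root_.conjReflect, map_add, conj_eq_neg_of_re_eq_zero hω, neg_add, neg_neg, hg _]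

theorem differentiableAt_conjReflect {a b : ℝ}
    (hg : ∀ z : ℂ, z.re ∈ [[a, b]] → DifferentiableAt ℂ g z) (z : ℂ)
    (hz : z.re ∈ [[-a, -b]]) :
    DifferentiableAt ℂ (conjReflect g) z := by
  have hz' : (-conj z).re ∈ [[a, b]] := by
    rw [← image_neg_uIcc] at hz
    obtain ⟨x, hx, hxz⟩ := hz
    simpa [← hxz] using hx
  have h := ((hg _ hz').comp _ differentiableAt_id.neg).conj_conj
  rw [conj_conj] at h
  exact h

end conjReflect

section qpow

variable {τ : ℂ}

theorem qpow_add (u v : ℂ) : qpow τ (u + v) = qpow τ u * qpow τ v := by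
  simp only [qpow, mul_add, Complex.exp_add]

theorem periodic_qpow (hτ : τ ≠ 0) : Periodic (qpow τ) τ⁻¹ := by
  have hperiod : qpow τ τ⁻¹ = 1 := by
    rw [qpow, mul_inv_cancel_right₀ hτ, Complex.exp_two_pi_mul_I]
  intro z
  rw [qpow_add, hperiod, mul_one]

theorem differentiable_qpow (τ : ℂ) : Differentiable ℂ (qpow τ) := by
  unfold qpow
  fun_prop

theorem conj_qpow (hτ : τ.re = 0) (u : ℂ) : conj (qpow τ u) = qpow τ (conj u) := by
  rw [qpow, qpow, ← Complex.exp_conj]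
  simp only [map_mul, map_ofNat, conj_ofReal, conj_I, conj_eq_neg_of_re_eq_zero hτ]
  congr 1
  ring

theorem conjReflect_Xminus (hτ : τ.re = 0) (lam : ℂ) (g : ℂ → ℂ) :
    conjReflect (Xminus τ lam g) = Xplus τ (-conj lam) (conjReflect g) := by
  funext z
  simp only [conjReflect, Xminus, Xplus, map_div₀, map_mul, map_sub, map_add, map_neg,
    conj_qpow hτ, conj_conj, map_one, map_ofNat, conj_I]
  ring_nf

theorem periodIntegral_comp_add_mul_qpow (hτ : τ.re = 0) (hτ₀ : τ ≠ 0) {F G : ℂ → ℂ}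
    (hF : Periodic F τ⁻¹) (hG : Periodic G τ⁻¹) {c : ℝ}
    (hFd : ∀ z : ℂ, z.re ∈ [[0, c]] → DifferentiableAt ℂ F z)
    (hGd : ∀ z : ℂ, z.re ∈ [[-c, 0]] → DifferentiableAt ℂ G z) :
    periodIntegral τ⁻¹ (fun z => F (z + c) * (qpow τ z * G z)) =
      qpow τ (-c) * periodIntegral τ⁻¹ (fun z => F z * (qpow τ z * G (z - c))) := by
  rw [periodIntegral_comp_add_mul (G := fun z => qpow τ z * G z) (re_inv_eq_zero hτ)
    (inv_ne_zero hτ₀) hF ((periodic_qpow hτ₀).mul hG) hFd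
    fun z hz => (differentiable_qpow τ z).mul (hGd z hz),
    ← periodIntegral_const_mul]
  congr 1
  funext z
  simp only [sub_eq_add_neg, qpow_add]
  ring

theorem continuousAt_mul_qpow_mul {F G : ℂ → ℂ}
    (hFd : ∀ z : ℂ, z.re ∈ [[-1, 1]] → DifferentiableAt ℂ F z)
    (hGd : ∀ z : ℂ, z.re ∈ [[-1, 1]] → DifferentiableAt ℂ G z) (c₁ c₂ : ℂ)
    (hc₁ : c₁.re ∈ Icc (-1) 1) (hc₂ : c₂.re ∈ Icc (-1) 1) (z : ℂ) (hz : z.re = 0) :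
    ContinuousAt (fun z => F (z + c₁) * (qpow τ z * G (z + c₂))) z := by
  have hFc := (hFd (z + c₁) (Icc_subset_uIcc (by simpa [hz] using hc₁))).continuousAt
  have hGc := (hGd (z + c₂) (Icc_subset_uIcc (by simpa [hz] using hc₂))).continuousAt
  have hq := (differentiable_qpow τ).continuous
  fun_prop

theorem periodIntegral_Xplus_mul (hτ : τ.re = 0) (hτ₀ : τ ≠ 0) (μ : ℂ) {F G : ℂ → ℂ}
    (hF : Periodic F τ⁻¹) (hG : Periodic G τ⁻¹)
    (hFd : ∀ z : ℂ, z.re ∈ [[-1, 1]] → DifferentiableAt ℂ F z)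
    (hGd : ∀ z : ℂ, z.re ∈ [[-1, 1]] → DifferentiableAt ℂ G z) :
    periodIntegral τ⁻¹ (fun z => Xplus τ μ F z * G z) =
      -periodIntegral τ⁻¹ (fun z => F z * Xplus τ (-μ) G z) := by
  have hstrip : ∀ {a b : ℝ}, a ∈ Icc (-1) 1 → b ∈ Icc (-1) 1 → [[a, b]] ⊆ [[-1, 1]] :=
    fun ha hb => uIcc_subset_uIcc (Icc_subset_uIcc ha) (Icc_subset_uIcc hb)
  have hshift : ∀ c : ℝ, c ∈ Icc (-1) 1 →
      periodIntegral τ⁻¹ (fun z => F (z + c) * (qpow τ z * G z)) =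
        qpow τ (-c) * periodIntegral τ⁻¹ (fun z => F z * (qpow τ z * G (z - c))) :=
    fun c hc => periodIntegral_comp_add_mul_qpow hτ hτ₀ hF hG
      (hFd · <| hstrip (by norm_num) hc ·)
      (hGd · <| hstrip ⟨by linarith [hc.2], by linarith [hc.1]⟩ (by norm_num) ·)
  set D := qpow τ (-1) - qpow τ 1 with hD
  have hL : ∀ z, Xplus τ μ F z * G z =
      qpow τ (-(1 / 2) - I * μ) / D * (F (z - 1) * (qpow τ z * G z)) -
      qpow τ (1 / 2 + I * μ) / D * (F (z + 1) * (qpow τ z * G z)) := by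
    intro z
    simp only [Xplus, ← hD]
    ring
  have hR : ∀ z, F z * Xplus τ (-μ) G z =
      qpow τ (-(1 / 2) + I * μ) / D * (F z * (qpow τ z * G (z - 1))) -
      qpow τ (1 / 2 - I * μ) / D * (F z * (qpow τ z * G (z + 1))) := by
    intro z
    simp only [Xplus, ← hD, mul_neg, sub_neg_eq_add, ← sub_eq_add_neg]
    ring
  have hcont := continuousAt_mul_qpow_mul (τ := τ) hFd hGd
  rw [funext hL, funext hR, periodIntegral_const_mul_sub (re_inv_eq_zero hτ) _ _
      (by simpa [← sub_eq_add_neg] using hcont (-1) 0 (by norm_num) (by norm_num))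
      (by simpa using hcont 1 0 (by norm_num) (by norm_num)),
    periodIntegral_const_mul_sub (re_inv_eq_zero hτ) _ _
      (by simpa [← sub_eq_add_neg] using hcont 0 (-1) (by norm_num) (by norm_num))
      (by simpa using hcont 0 1 (by norm_num) (by norm_num))]
  have hdown := hshift (-1) (by norm_num)
  have hup := hshift 1 (by norm_num)
  simp only [ofReal_neg, ofReal_one, neg_neg, ← sub_eq_add_neg, sub_neg_eq_add] at hdown hup
  rw [hdown, hup]
  have ha : qpow τ (-(1 / 2) - I * μ) * qpow τ 1 = qpow τ (1 / 2 - I * μ) := by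
    rw [← qpow_add]; congr 1; ring
  have hb : qpow τ (1 / 2 + I * μ) * qpow τ (-1) = qpow τ (-(1 / 2) + I * μ) := by
    rw [← qpow_add]; congr 1; ring
  linear_combination (periodIntegral τ⁻¹ (fun z => F z * (qpow τ z * G (z + 1))) * ha -
    periodIntegral τ⁻¹ (fun z => F z * (qpow τ z * G (z - 1))) * hb) / D

end qpow

theorem conj_pairSU (τ : ℂ) (f g : ℂ → ℂ) : conj (pairSU τ f g) = pairSU τ g f := by
  rw [pairSU, pairSU, ← intervalIntegral.intervalIntegral_conj]
  simp only [map_mul, conj_conj, mul_comm]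

section pairSU

variable {τ : ℂ} {f g : ℂ → ℂ}

theorem pairSU_eq_periodIntegral (hτ : τ.re = 0) :
    pairSU τ f g = periodIntegral τ⁻¹ (fun z => f z * conjReflect g z) := by
  refine intervalIntegral.integral_congr fun y _ => ?_
  have hy : ((y : ℂ) * τ⁻¹).re = 0 := by simp [re_inv_eq_zero hτ]
  simp only [div_eq_mul_inv, conjReflect_apply_of_re_eq_zero hy]

theorem pairSU_comp_add_ofReal (hτ : τ.re = 0) (hτ₀ : τ ≠ 0) (hf : Periodic f τ⁻¹)
    (hg : Periodic g τ⁻¹) {c : ℝ}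
    (hfd : ∀ z : ℂ, z.re ∈ [[0, c]] → DifferentiableAt ℂ f z)
    (hgd : ∀ z : ℂ, z.re ∈ [[0, c]] → DifferentiableAt ℂ g z) :
    pairSU τ (fun z => f (z + c)) g = pairSU τ f (fun z => g (z + c)) := by
  rw [pairSU_eq_periodIntegral hτ, pairSU_eq_periodIntegral hτ, conjReflect_comp_add, conj_ofReal]
  exact periodIntegral_comp_add_mul (re_inv_eq_zero hτ) (inv_ne_zero hτ₀) hf
    (hg.conjReflect (re_inv_eq_zero hτ)) hfd
    (differentiableAt_conjReflect hgd (a := 0) (b := c) · <| by simpa [uIcc_comm] using ·)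

theorem pairSU_Xplus (hτ : τ.re = 0) (hτ₀ : τ ≠ 0) (lam : ℝ) (hf : Periodic f τ⁻¹)
    (hg : Periodic g τ⁻¹) (hfd : ∀ z : ℂ, z.re ∈ [[-1, 1]] → DifferentiableAt ℂ f z)
    (hgd : ∀ z : ℂ, z.re ∈ [[-1, 1]] → DifferentiableAt ℂ g z) :
    pairSU τ (Xplus τ lam f) g = -pairSU τ f (Xminus τ lam g) := by
  rw [pairSU_eq_periodIntegral hτ, pairSU_eq_periodIntegral hτ, conjReflect_Xminus hτ,
    conj_ofReal]
  exact periodIntegral_Xplus_mul hτ hτ₀ lam hf (hg.conjReflect (re_inv_eq_zero hτ)) hfd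
    (differentiableAt_conjReflect hgd · <| by simpa [uIcc_comm] using ·)

end pairSU

/-- Unitarity of the principal series representation of `U_q(su(1,1))` for `0 < q < 1`:
for `τ⁻¹`-periodic functions `f, g` analytic on the strip `|Re z| ≤ 1`,
`⟨X⁺_λ f, g⟩ = −⟨f, X⁻_λ g⟩`, `⟨X⁻_λ f, g⟩ = −⟨f, X⁺_λ g⟩`, and
`⟨K^{±1} f, g⟩ = ⟨f, K^{±1} g⟩`. -/
theorem principal_series_unitarity (t : ℝ) (ht : 0 < t) (τ : ℂ)
    (hτ : τ = Complex.I * (t : ℂ)) (lam : ℝ) (f g : ℂ → ℂ)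
    (hfp : ∀ z : ℂ, f (z + τ⁻¹) = f z) (hgp : ∀ z : ℂ, g (z + τ⁻¹) = g z)
    (hfa : ∀ z : ℂ, |z.re| ≤ 1 → AnalyticAt ℂ f z)
    (hga : ∀ z : ℂ, |z.re| ≤ 1 → AnalyticAt ℂ g z) :
    pairSU τ (Xplus τ (lam : ℂ) f) g = -pairSU τ f (Xminus τ (lam : ℂ) g) ∧
    pairSU τ (Xminus τ (lam : ℂ) f) g = -pairSU τ f (Xplus τ (lam : ℂ) g) ∧
    pairSU τ (fun z => f (z + 1)) g = pairSU τ f (fun z => g (z + 1)) ∧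
    pairSU τ (fun z => f (z - 1)) g = pairSU τ f (fun z => g (z - 1)) := by
  have hτre : τ.re = 0 := by simp [hτ]
  have hτ₀ : τ ≠ 0 := by simpa [hτ] using ht.ne'
  have hfd : ∀ z : ℂ, z.re ∈ [[-1, 1]] → DifferentiableAt ℂ f z := fun z hz =>
    (hfa z (abs_le.2 (by simpa using hz))).differentiableAt
  have hgd : ∀ z : ℂ, z.re ∈ [[-1, 1]] → DifferentiableAt ℂ g z := fun z hz =>
    (hga z (abs_le.2 (by simpa using hz))).differentiableAt
  have hstrip : ∀ {c : ℝ}, c ∈ Icc (-1) 1 → [[0, c]] ⊆ [[-1, 1]] := fun hc =>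
    uIcc_subset_uIcc (by simp) (Icc_subset_uIcc hc)
  refine ⟨pairSU_Xplus hτre hτ₀ lam hfp hgp hfd hgd, ?_, ?_, ?_⟩
  · rw [← conj_pairSU τ g, ← neg_neg (pairSU τ g _),
      ← pairSU_Xplus hτre hτ₀ lam hgp hfp hgd hfd, map_neg, conj_pairSU]
  · simpa using pairSU_comp_add_ofReal hτre hτ₀ hfp hgp (c := 1)
      (hfd · <| hstrip (by norm_num) ·) (hgd · <| hstrip (by norm_num) ·)
  · simpa [← sub_eq_add_neg] using pairSU_comp_add_ofReal hτre hτ₀ hfp hgp (c := -1)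
      (hfd · <| hstrip (by norm_num) ·) (hgd · <| hstrip (by norm_num) ·)
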